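/- Interpolating case of the SAFT Poisson summation formula: let f : ℝ → ℂ be a Schwartz function whose SAFT F_A satisfies F_A(0) = 1 and F_A(n) = 0 for every nonzero integer n. Then for every t ∈ ℝ, Σ_{k∈ℤ} f(t + k·Δ) · exp((Complex.I/(2b)) · (a·(t + k·Δ)² + 2·p·(t + k·Δ))) = (2πb)^(−1/2). -/

import Mathlib

/-!
After multiplication by the chirp `exp (i (a t² + 2 p t) / (2b))`, the SAFT of `f` at `ω` is,
up to the factor `(2πb)^(-1/2)` and a unimodular factor, the Fourier transform of the chirped
signal `g` at `ω / (2πb)`. The hypotheses therefore say that `𝓕 g` vanishes on `ℤ / Δ \ {0}`, and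
Poisson summation over `Δ ℤ` collapses to the single term `Δ⁻¹ 𝓕 g 0 = Δ⁻¹ √Δ`.
-/

open MeasureTheory Real

/-- The Special Affine Fourier Transform (SAFT) with parameters `a, b, c, d, p, q`,
where `Ω = 2*(b*q - d*p)`. -/
noncomputable def SAFT (a b d p q : ℝ) (f : ℝ → ℂ) (ω : ℝ) : ℂ :=
  (Real.sqrt (2 * π * b) : ℂ)⁻¹ *
    ∫ t : ℝ, f t * Complex.exp (Complex.I / (2 * b) *
      ((a * t ^ 2 + d * ω ^ 2 - 2 * t * ω + 2 * p * t + 2 * (b * q - d * p) * ω : ℝ) : ℂ))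

open Filter Asymptotics FourierTransform

theorem Real.fourier_comp_mul_left {E : Type*} [NormedAddCommGroup E] [NormedSpace ℂ E]
    (g : ℝ → E) {c : ℝ} (hc : c ≠ 0) (w : ℝ) :
    𝓕 (fun x => g (c * x)) w = |c⁻¹| • 𝓕 g (w / c) := by
  simp only [Real.fourier_real_eq]
  have h : ∀ v : ℝ, 𝐞 (-(v * w)) • g (c * v) = 𝐞 (-(c * v * (w / c))) • g (c * v) := by
    intro v; congr 3; field_simp
  simp_rw [h]
  exact Measure.integral_comp_mul_left (fun u => 𝐞 (-(u * (w / c))) • g u) c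

theorem isBigO_comp_mul_left_abs_rpow {E : Type*} [Norm E] {g : ℝ → E} {s : ℝ}
    (hg : g =O[cocompact ℝ] (|·| ^ s)) {c : ℝ} (hc : c ≠ 0) :
    (fun x => g (c * x)) =O[cocompact ℝ] (|·| ^ s) := by
  refine (hg.comp_tendsto (tendsto_cocompact_mul_left₀ hc)).trans ?_
  have h : (fun x : ℝ => |c * x| ^ s) = fun x => |c| ^ s * |x| ^ s := by
    funext x; rw [abs_mul, mul_rpow (abs_nonneg c) (abs_nonneg x)]
  simpa only [Function.comp_def, h] using isBigO_const_mul_self _ _ _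

theorem Real.tsum_add_mul_eq_tsum_fourier {g : ℝ → ℂ} (hc : Continuous g) {s : ℝ} (hs : 1 < s)
    (hg : g =O[cocompact ℝ] (|·| ^ (-s))) {Δ : ℝ} (hΔ : 0 < Δ)
    (hFg : Summable fun n : ℤ => 𝓕 g (n / Δ)) (t : ℝ) :
    ∑' k : ℤ, g (t + k * Δ) =
      Δ⁻¹ • ∑' n : ℤ, 𝓕 g (n / Δ) * fourier n ((t / Δ : ℝ) : UnitAddCircle) := by
  have hF : ∀ w : ℝ, 𝓕 (fun x => g (Δ * x)) w = Δ⁻¹ • 𝓕 g (w / Δ) := fun w => by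
    rw [Real.fourier_comp_mul_left g hΔ.ne', abs_of_pos (inv_pos.mpr hΔ)]
  have hpoisson := Real.tsum_eq_tsum_fourier_of_rpow_decay_of_summable (f := fun x => g (Δ * x))
    (hc.comp (continuous_const_mul Δ)) hs (isBigO_comp_mul_left_abs_rpow hg hΔ.ne')
    (by simpa only [hF] using hFg.const_smul Δ⁻¹) (t / Δ)
  have hshift : ∀ k : ℤ, Δ * (t / Δ + k) = t + k * Δ := fun k => by field_simp
  simp only [hshift, hF, smul_mul_assoc] at hpoisson
  rw [hpoisson, tsum_const_smul'']

theorem Real.tsum_add_mul_eq_of_fourier_eq_zero {g : ℝ → ℂ} (hc : Continuous g) {s : ℝ}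
    (hs : 1 < s) (hg : g =O[cocompact ℝ] (|·| ^ (-s))) {Δ : ℝ} (hΔ : 0 < Δ)
    (hFg : ∀ n : ℤ, n ≠ 0 → 𝓕 g (n / Δ) = 0) (t : ℝ) :
    ∑' k : ℤ, g (t + k * Δ) = Δ⁻¹ • 𝓕 g 0 := by
  have hsupp : ∀ n : ℤ, n ≠ 0 → 𝓕 g (n / Δ) * fourier n ((t / Δ : ℝ) : UnitAddCircle) = 0 :=
    fun n hn => by rw [hFg n hn, zero_mul]
  rw [Real.tsum_add_mul_eq_tsum_fourier hc hs hg hΔ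
    (summable_of_ne_finset_zero (s := {0}) fun n hn => hFg n (by simpa using hn)) t,
    tsum_eq_single 0 hsupp]
  simp

noncomputable def saftChirp (a b p : ℝ) (f : ℝ → ℂ) (x : ℝ) : ℂ :=
  f x * Complex.exp (Complex.I / (2 * b) * ((a * x ^ 2 + 2 * p * x : ℝ) : ℂ))

section saftChirp

variable (a b p : ℝ) (f : ℝ → ℂ)

theorem norm_saftChirp (x : ℝ) : ‖saftChirp a b p f x‖ = ‖f x‖ := by
  have h : Complex.I / (2 * b) * ((a * x ^ 2 + 2 * p * x : ℝ) : ℂ) =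
      (((a * x ^ 2 + 2 * p * x) / (2 * b) : ℝ) : ℂ) * Complex.I := by
    push_cast; ring
  rw [saftChirp, norm_mul, h, Complex.norm_exp_ofReal_mul_I, mul_one]

theorem saftChirp_isBigO (l : Filter ℝ) : saftChirp a b p f =O[l] f :=
  isBigO_of_le l fun x => (norm_saftChirp a b p f x).le

variable {f} in
theorem Continuous.saftChirp (hf : Continuous f) : Continuous (saftChirp a b p f) := by
  unfold _root_.saftChirp
  fun_prop

theorem fourier_saftChirp (d q : ℝ) (hb : 0 < b) (ω : ℝ) :
    𝓕 (saftChirp a b p f) (ω / (2 * π * b)) =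
      Real.sqrt (2 * π * b) *
        Complex.exp (-(Complex.I / (2 * b) * ((d * ω ^ 2 + 2 * (b * q - d * p) * ω : ℝ) : ℂ))) *
        SAFT a b d p q f ω := by
  have hsqrt : (Real.sqrt (2 * π * b) : ℂ) ≠ 0 := by
    exact_mod_cast (Real.sqrt_pos.mpr (by positivity)).ne'
  rw [SAFT, mul_right_comm (Real.sqrt (2 * π * b) : ℂ), mul_inv_cancel_left₀ hsqrt,
    ← integral_mul_const, Real.fourier_real_eq_integral_exp_smul]
  congr 1
  funext u
  rw [saftChirp, smul_eq_mul, mul_comm, mul_assoc (f u), mul_assoc (f u), ← Complex.exp_add,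
    ← Complex.exp_add]
  congr 2
  have hπ : (π : ℂ) ≠ 0 := by exact_mod_cast pi_ne_zero
  have hb' : (b : ℂ) ≠ 0 := by exact_mod_cast hb.ne'
  push_cast
  field_simp
  ring

end saftChirp

theorem saft_poisson_interpolating_general (a b d p q : ℝ) (hb : 0 < b)
    (f : SchwartzMap ℝ ℂ)
    (h0 : SAFT a b d p q (fun x => f x) 0 = 1)
    (hn : ∀ n : ℤ, n ≠ 0 → SAFT a b d p q (fun x => f x) (n : ℝ) = 0) :
    ∀ t : ℝ,
      (∑' k : ℤ, f (t + (k : ℝ) * (2 * π * b)) *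
        Complex.exp (Complex.I / (2 * b) *
          ((a * (t + (k : ℝ) * (2 * π * b)) ^ 2 + 2 * p * (t + (k : ℝ) * (2 * π * b)) : ℝ) : ℂ))) =
      (Real.sqrt (2 * π * b) : ℂ)⁻¹ := by
  intro t
  have hΔ : 0 < 2 * π * b := by positivity
  have hF : ∀ n : ℤ, n ≠ 0 → 𝓕 (saftChirp a b p f) (n / (2 * π * b)) = 0 := fun n hn0 => by
    rw [fourier_saftChirp a b p f d q hb, hn n hn0, mul_zero]
  have hF0 : 𝓕 (saftChirp a b p f) 0 = Real.sqrt (2 * π * b) := by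
    simpa [h0] using fourier_saftChirp a b p f d q hb 0
  have hdecay : saftChirp a b p f =O[cocompact ℝ] (|·| ^ (-2 : ℝ)) :=
    (saftChirp_isBigO a b p f _).trans (f.isBigO_cocompact_rpow (-2))
  calc _ = ∑' k : ℤ, saftChirp a b p f (t + k * (2 * π * b)) := rfl
    _ = (2 * π * b)⁻¹ • 𝓕 (saftChirp a b p f) 0 := Real.tsum_add_mul_eq_of_fourier_eq_zero
      (f.continuous.saftChirp a b p) one_lt_two hdecay hΔ hF t
    _ = _ := by
      rw [hF0, Complex.real_smul, ← Complex.ofReal_mul, inv_mul_eq_div, Real.sqrt_div_self,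
        Complex.ofReal_inv]

/-- Interpolating case of the SAFT Poisson summation formula, with `Δ = 2πb`. -/
theorem saft_poisson_interpolating (a b c d p q : ℝ) (hb : 0 < b) (habcd : a * d - b * c = 1)
    (f : SchwartzMap ℝ ℂ)
    (h0 : SAFT a b d p q (fun x => f x) 0 = 1)
    (hn : ∀ n : ℤ, n ≠ 0 → SAFT a b d p q (fun x => f x) (n : ℝ) = 0) :
    ∀ t : ℝ,
      (∑' k : ℤ, f (t + (k : ℝ) * (2 * π * b)) *
        Complex.exp (Complex.I / (2 * b) *
          ((a * (t + (k : ℝ) * (2 * π * b)) ^ 2 + 2 * p * (t + (k : ℝ) * (2 * π * b)) : ℝ) : ℂ))) =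
      (Real.sqrt (2 * π * b) : ℂ)⁻¹ :=
  saft_poisson_interpolating_general a b d p q hb f h0 hn
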